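/- arXiv:1505.07484 — 3 statements merged into one kernel-verified Lean document; each statement's English description precedes it below -/
import Mathlib

section
/- Fix a, b ∈ ℝ and define f : ℝ → ℝ by f(s) = Φ(a − s) − b·exp(a·s − s²/2). If 0 < b < Φ(a), then there is exactly one s₀ ∈ ℝ such that f(s₀) = 0, and this s₀ satisfies 0 < s₀ < φ(a)/b + a. -/
open Real

/-- The standard normal density `φ(u) = (2π)^{-1/2} exp(-u²/2)`. -/
noncomputable def stdNormalPDF (u : ℝ) : ℝ := (Real.sqrt (2 * Real.pi))⁻¹ * Real.exp (-u ^ 2 / 2)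

/-- The standard normal cumulative distribution function `Φ`. -/
noncomputable def stdNormalCDF (x : ℝ) : ℝ := ∫ u in Set.Iic x, stdNormalPDF u

/-!
Since `φ(a - s) = φ(a)·exp(a s - s²/2)`, the zeros of `Φ(a - s) - b·exp(a s - s²/2)` are the
solutions of `R(a - s) = b / φ(a)`, where `R = Φ / φ` is the Mills ratio reflected to the left
tail. Because `φ' = -t φ`, we have `R' = (φ + t Φ) / φ`, and
`φ(t) + t Φ(t) = ∫_{u ≤ t} (t - u) φ(u) du > 0`. Hence `R` is strictly increasing, and for
`t < 0` the same inequality reads `R(t) < 1 / (-t)`, so `R → 0` at `-∞`. As `b / φ(a) < R(a)`,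
the intermediate value theorem and monotonicity give exactly one zero `s₀`, and `a - s₀ < a`.
If moreover `s₀ > a`, then `b / φ(a) = R(a - s₀) < 1 / (s₀ - a)`.
-/

open Set MeasureTheory Filter Topology

lemma stdNormalPDF_pos (u : ℝ) : 0 < stdNormalPDF u := by
  unfold stdNormalPDF
  positivity

lemma stdNormalPDF_sub (a s : ℝ) :
    stdNormalPDF (a - s) = stdNormalPDF a * exp (a * s - s ^ 2 / 2) := by
  unfold stdNormalPDF
  rw [mul_assoc, ← exp_add]
  ring_nf

lemma hasDerivAt_stdNormalPDF (u : ℝ) : HasDerivAt stdNormalPDF (-u * stdNormalPDF u) u := by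
  have h : HasDerivAt (fun x : ℝ => -x ^ 2 / 2) (-u) u :=
    ((hasDerivAt_pow 2 u).neg.div_const 2).congr_deriv (by ring)
  exact (h.exp.const_mul (Real.sqrt (2 * Real.pi))⁻¹).congr_deriv (by rw [stdNormalPDF]; ring)

lemma continuous_stdNormalPDF : Continuous stdNormalPDF := by
  unfold stdNormalPDF
  fun_prop

lemma tendsto_stdNormalPDF_atBot : Tendsto stdNormalPDF atBot (𝓝 0) := by
  have hsq : Tendsto (fun u : ℝ => u ^ 2 / 2) atBot atTop := by
    have := (tendsto_pow_atTop (α := ℝ) two_ne_zero).comp tendsto_neg_atBot_atTop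
    exact (this.congr fun u => by simp).atTop_div_const two_pos
  have h : Tendsto (fun u : ℝ => -u ^ 2 / 2) atBot atBot :=
    (tendsto_neg_atTop_atBot.comp hsq).congr fun u => by simp [neg_div]
  have := (tendsto_exp_atBot.comp h).const_mul (Real.sqrt (2 * Real.pi))⁻¹
  rwa [mul_zero] at this

lemma integrable_stdNormalPDF : Integrable stdNormalPDF := by
  refine ((integrable_exp_neg_mul_sq (by norm_num : (0 : ℝ) < 1 / 2)).const_mul
    (Real.sqrt (2 * Real.pi))⁻¹).congr (ae_of_all _ fun u => ?_)
  unfold stdNormalPDF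
  ring_nf

lemma integrable_neg_mul_stdNormalPDF : Integrable fun u : ℝ => -u * stdNormalPDF u := by
  refine ((integrable_mul_exp_neg_mul_sq (by norm_num : (0 : ℝ) < 1 / 2)).const_mul
    (-(Real.sqrt (2 * Real.pi))⁻¹)).congr (ae_of_all _ fun u => ?_)
  unfold stdNormalPDF
  ring_nf

lemma setIntegral_Iic_neg_mul_stdNormalPDF (t : ℝ) :
    ∫ u in Iic t, -u * stdNormalPDF u = stdNormalPDF t := by
  simpa using integral_Iic_of_hasDerivAt_of_tendsto' (fun u _ => hasDerivAt_stdNormalPDF u)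
    integrable_neg_mul_stdNormalPDF.integrableOn tendsto_stdNormalPDF_atBot

lemma stdNormalPDF_add_mul_stdNormalCDF (t : ℝ) :
    stdNormalPDF t + t * stdNormalCDF t = ∫ u in Iic t, (t - u) * stdNormalPDF u := by
  have hsplit : (fun u : ℝ => (t - u) * stdNormalPDF u)
      = fun u => t * stdNormalPDF u + -u * stdNormalPDF u := by
    funext u
    ring
  rw [hsplit, integral_add (integrable_stdNormalPDF.const_mul t).integrableOn
    integrable_neg_mul_stdNormalPDF.integrableOn, setIntegral_Iic_neg_mul_stdNormalPDF,
    integral_const_mul, stdNormalCDF, add_comm]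

lemma stdNormalPDF_add_mul_stdNormalCDF_pos (t : ℝ) : 0 < stdNormalPDF t + t * stdNormalCDF t := by
  have hnonneg : ∀ u ∈ Iic t, 0 ≤ (t - u) * stdNormalPDF u := fun u hu =>
    mul_nonneg (sub_nonneg.2 hu) (stdNormalPDF_pos u).le
  have hint : IntegrableOn (fun u : ℝ => (t - u) * stdNormalPDF u) (Iic t) :=
    ((integrable_stdNormalPDF.const_mul t).add
      integrable_neg_mul_stdNormalPDF).integrableOn.congr_fun
        (fun u _ => by simp only [Pi.add_apply]; ring) measurableSet_Iic
  rw [stdNormalPDF_add_mul_stdNormalCDF,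
    setIntegral_pos_iff_support_of_nonneg_ae (ae_restrict_of_forall_mem measurableSet_Iic hnonneg)
      hint]
  have hsub : Iio t ⊆ Function.support (fun u => (t - u) * stdNormalPDF u) ∩ Iic t :=
    fun u hu => ⟨(mul_pos (sub_pos.2 hu) (stdNormalPDF_pos u)).ne', mem_Iic.2 (le_of_lt hu)⟩
  exact (volume_Iio (a := t) ▸ ENNReal.zero_lt_top).trans_le (measure_mono hsub)

lemma hasDerivAt_stdNormalCDF (x : ℝ) : HasDerivAt stdNormalCDF (stdNormalPDF x) x := by
  have hrepr : stdNormalCDF = fun y => stdNormalCDF 0 + ∫ u in (0 : ℝ)..y, stdNormalPDF u := by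
    funext y
    rw [← intervalIntegral.integral_Iic_sub_Iic integrable_stdNormalPDF.integrableOn
      integrable_stdNormalPDF.integrableOn, stdNormalCDF, stdNormalCDF]
    ring
  rw [hrepr]
  exact (intervalIntegral.integral_hasDerivAt_right integrable_stdNormalPDF.intervalIntegrable
    (continuous_stdNormalPDF.stronglyMeasurableAtFilter _ _)
    continuous_stdNormalPDF.continuousAt).const_add _

/-- `Φ(t) / φ(t)`, the Mills ratio evaluated at `-t`. -/
noncomputable def cdfPdfRatio (t : ℝ) : ℝ := stdNormalCDF t / stdNormalPDF t

lemma hasDerivAt_cdfPdfRatio (t : ℝ) :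
    HasDerivAt cdfPdfRatio ((stdNormalPDF t + t * stdNormalCDF t) / stdNormalPDF t) t := by
  have hφ := (stdNormalPDF_pos t).ne'
  refine ((hasDerivAt_stdNormalCDF t).div (hasDerivAt_stdNormalPDF t) hφ).congr_deriv ?_
  field_simp
  ring

lemma continuous_cdfPdfRatio : Continuous cdfPdfRatio :=
  continuous_iff_continuousAt.2 fun t => (hasDerivAt_cdfPdfRatio t).continuousAt

lemma strictMono_cdfPdfRatio : StrictMono cdfPdfRatio :=
  strictMono_of_deriv_pos fun t => (hasDerivAt_cdfPdfRatio t).deriv ▸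
    div_pos (stdNormalPDF_add_mul_stdNormalCDF_pos t) (stdNormalPDF_pos t)

lemma cdfPdfRatio_lt_inv_neg {t : ℝ} (ht : t < 0) : cdfPdfRatio t < (-t)⁻¹ := by
  rw [cdfPdfRatio, div_lt_iff₀ (stdNormalPDF_pos t), inv_mul_eq_div,
    lt_div_iff₀ (neg_pos.2 ht)]
  linarith [stdNormalPDF_add_mul_stdNormalCDF_pos t]

lemma tendsto_cdfPdfRatio_atBot : Tendsto cdfPdfRatio atBot (𝓝 0) := by
  have hinv : Tendsto (fun t : ℝ => (-t)⁻¹) atBot (𝓝 0) :=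
    tendsto_inv_atTop_zero.comp tendsto_neg_atBot_atTop
  refine tendsto_of_tendsto_of_tendsto_of_le_of_le' tendsto_const_nhds hinv
    (Eventually.of_forall fun t => ?_) ((eventually_lt_atBot 0).mono fun t ht =>
      (cdfPdfRatio_lt_inv_neg ht).le)
  exact div_nonneg (setIntegral_nonneg measurableSet_Iic fun u _ => (stdNormalPDF_pos u).le)
    (stdNormalPDF_pos t).le

lemma cdf_sub_mul_exp_eq_zero_iff (a b s : ℝ) :
    stdNormalCDF (a - s) - b * exp (a * s - s ^ 2 / 2) = 0 ↔
      cdfPdfRatio (a - s) = b / stdNormalPDF a := by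
  have hφ := (stdNormalPDF_pos a).ne'
  rw [cdfPdfRatio, stdNormalPDF_sub, sub_eq_zero, div_eq_div_iff
    (mul_pos (stdNormalPDF_pos a) (exp_pos _)).ne' hφ]
  constructor <;> intro h
  · rw [h]
    ring
  · exact mul_right_cancel₀ hφ (by linarith)

/-- For `f(s) = Φ(a-s) - b·exp(a·s - s²/2)` with `0 < b < Φ(a)`, there is exactly one zero
`s₀` of `f`, and it satisfies `0 < s₀ < φ(a)/b + a`. -/
theorem unique_zero_of_cdf_minus_exp (a b : ℝ) (hb : 0 < b) (hbΦ : b < stdNormalCDF a) :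
    (∃! s₀ : ℝ, stdNormalCDF (a - s₀) - b * Real.exp (a * s₀ - s₀ ^ 2 / 2) = 0) ∧
    (∀ s₀ : ℝ, stdNormalCDF (a - s₀) - b * Real.exp (a * s₀ - s₀ ^ 2 / 2) = 0 →
      0 < s₀ ∧ s₀ < stdNormalPDF a / b + a) := by
  simp only [cdf_sub_mul_exp_eq_zero_iff]
  set y := b / stdNormalPDF a
  have hy : 0 < y := div_pos hb (stdNormalPDF_pos a)
  have hya : y < cdfPdfRatio a := div_lt_div_of_pos_right hbΦ (stdNormalPDF_pos a)
  obtain ⟨t₁, ht₁a, ht₁⟩ : ∃ t < a, cdfPdfRatio t < y :=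
    ((eventually_lt_atBot a).and (tendsto_cdfPdfRatio_atBot.eventually (gt_mem_nhds hy))).exists
  obtain ⟨t₀, -, ht₀⟩ := intermediate_value_Ioo ht₁a.le continuous_cdfPdfRatio.continuousOn
    ⟨ht₁, hya⟩
  refine ⟨⟨a - t₀, by simpa using ht₀, fun s hs =>
    by linarith [strictMono_cdfPdfRatio.injective (hs.trans ht₀.symm)]⟩, fun s hs => ⟨?_, ?_⟩⟩
  · linarith [strictMono_cdfPdfRatio.lt_iff_lt.1 (hs ▸ hya : cdfPdfRatio (a - s) < cdfPdfRatio a)]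
  · rcases le_or_gt s a with hsa | hsa
    · linarith [div_pos (stdNormalPDF_pos a) hb]
    · have hlt : y < (s - a)⁻¹ := by
        simpa [hs] using cdfPdfRatio_lt_inv_neg (sub_neg.2 hsa)
      have := (lt_inv_comm₀ hy (sub_pos.2 hsa)).1 hlt
      rw [inv_div] at this
      linarith
end

section
/- Let Z be a real random variable and q > 0 such that P[Z ≤ 0] = 0, P[Z ≤ q] > 0, and the map z ↦ P[Z ≤ z] is convex on the interval (0, q]. Then E[Z | Z ≤ q] ≥ q/2, i.e. E[Z·1{Z ≤ q}] ≥ (q/2)·P[Z ≤ q]. -/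
open MeasureTheory Filter Topology

section Aux

variable {Ω : Type*} [MeasurableSpace Ω] (P : Measure Ω) [IsProbabilityMeasure P]

/-- Convexity bound: the CDF is below the chord from `0` to `q`. -/
lemma cdf_le_linear (Z : Ω → ℝ) (hm : Measurable Z) (q : ℝ) (hq : 0 < q)
    (h0 : P {ω | Z ω ≤ 0} = 0)
    (hconv : ConvexOn ℝ (Set.Ioc (0 : ℝ) q) (fun z => (P {ω | Z ω ≤ z}).toReal))
    {z : ℝ} (hz : z ∈ Set.Ioc (0 : ℝ) q) :
    (P {ω | Z ω ≤ z}).toReal ≤ z / q * (P {ω | Z ω ≤ q}).toReal := by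
  obtain ⟨hz0, hzq⟩ := hz
  set F : ℝ → ℝ := fun z => (P {ω | Z ω ≤ z}).toReal with hF
  set ε : ℕ → ℝ := fun n => z / (n + 2) with hε
  have hεpos : ∀ n, 0 < ε n := fun n => div_pos hz0 (by positivity)
  have hεlt : ∀ n, ε n < z := by
    intro n
    rw [hε, div_lt_iff₀ (by positivity : (0:ℝ) < (n:ℝ) + 2)]
    nlinarith
  have hεq : ∀ n, 0 < q - ε n := fun n => by have := hεlt n; linarith
  -- ε n → 0
  have hε0 : Tendsto ε atTop (𝓝 0) := by
    rw [hε]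
    apply Tendsto.div_atTop tendsto_const_nhds
    exact tendsto_atTop_add_const_right _ _ tendsto_natCast_atTop_atTop
  -- F (ε n) → 0
  have hFε0 : Tendsto (fun n => F (ε n)) atTop (𝓝 0) := by
    have hanti : Antitone (fun n => {ω | Z ω ≤ ε n}) := by
      intro n m hnm ω hω
      have hle : ε m ≤ ε n := by
        apply div_le_div_of_nonneg_left hz0.le (by positivity)
        have : (n : ℝ) ≤ m := Nat.cast_le.2 hnm
        linarith
      exact le_trans hω hle
    have hib : Tendsto (fun n => P {ω | Z ω ≤ ε n}) atTop
        (𝓝 (P (⋂ n, {ω | Z ω ≤ ε n}))) :=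
      tendsto_measure_iInter_atTop
        (fun n => (hm measurableSet_Iic).nullMeasurableSet) hanti ⟨0, measure_ne_top _ _⟩
    have hsub : P (⋂ n, {ω | Z ω ≤ ε n}) = 0 := by
      refine measure_mono_null ?_ h0
      intro ω hω
      simp only [Set.mem_iInter, Set.mem_setOf_eq] at hω ⊢
      exact ge_of_tendsto' hε0 hω
    rw [hsub] at hib
    have := (ENNReal.tendsto_toReal (by simp)).comp hib
    exact (by simpa using this : Tendsto (ENNReal.toReal ∘ fun n => P {ω | Z ω ≤ ε n}) atTop (𝓝 0))
  -- the chord bound at ε n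
  have hbound : ∀ n, F z ≤ (q - z) / (q - ε n) * F (ε n) + (z - ε n) / (q - ε n) * F q := by
    intro n
    have h1 : ε n ∈ Set.Ioc (0:ℝ) q := ⟨hεpos n, le_of_lt ((hεlt n).trans_le hzq)⟩
    have h2 : q ∈ Set.Ioc (0:ℝ) q := ⟨hq, le_rfl⟩
    have ha : (0:ℝ) ≤ (q - z) / (q - ε n) := div_nonneg (by linarith) (hεq n).le
    have hb : (0:ℝ) ≤ (z - ε n) / (q - ε n) := div_nonneg (by have := hεlt n; linarith) (hεq n).le
    have hne : q - ε n ≠ 0 := (hεq n).ne'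
    have hab : (q - z) / (q - ε n) + (z - ε n) / (q - ε n) = 1 := by
      rw [← add_div, show q - z + (z - ε n) = q - ε n by ring, div_self hne]
    have key := hconv.2 h1 h2 ha hb hab
    have harg : ((q - z) / (q - ε n)) • ε n + ((z - ε n) / (q - ε n)) • q = z := by
      rw [smul_eq_mul, smul_eq_mul, div_mul_eq_mul_div, div_mul_eq_mul_div, ← add_div,
        show (q - z) * ε n + (z - ε n) * q = z * (q - ε n) by ring, mul_div_assoc,
        div_self hne, mul_one]
    rw [harg] at key
    simpa [smul_eq_mul] using key
  -- take the limit
  have hlim : Tendsto (fun n => (q - z) / (q - ε n) * F (ε n) + (z - ε n) / (q - ε n) * F q)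
      atTop (𝓝 (z / q * F q)) := by
    have hqε : Tendsto (fun n => q - ε n) atTop (𝓝 q) := by
      simpa using tendsto_const_nhds.sub hε0
    have h1 : Tendsto (fun n => (q - z) / (q - ε n)) atTop (𝓝 ((q - z) / q)) :=
      tendsto_const_nhds.div hqε hq.ne'
    have h2 : Tendsto (fun n => (z - ε n) / (q - ε n)) atTop (𝓝 (z / q)) := by
      have : Tendsto (fun n => z - ε n) atTop (𝓝 z) := by
        simpa using tendsto_const_nhds.sub hε0
      exact this.div hqε hq.ne'
    have := (h1.mul hFε0).add
      (h2.mul (tendsto_const_nhds : Tendsto (fun _ : ℕ => F q) atTop (𝓝 (F q))))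
    simpa using this
  exact le_of_tendsto_of_tendsto' tendsto_const_nhds hlim hbound




/-- Core version assuming `Z` is measurable. -/
lemma truncated_core (Z : Ω → ℝ) (hm : Measurable Z) (hZ : Integrable Z P) (q : ℝ)
    (hq : 0 < q) (h0 : P {ω | Z ω ≤ 0} = 0)
    (hconv : ConvexOn ℝ (Set.Ioc (0 : ℝ) q) (fun z => (P {ω | Z ω ≤ z}).toReal)) :
    ∫ ω in {ω | Z ω ≤ q}, Z ω ∂P ≥ (q / 2) * (P {ω | Z ω ≤ q}).toReal := by
  set c : ℝ := (P {ω | Z ω ≤ q}).toReal with hc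
  have hc0 : 0 ≤ c := ENNReal.toReal_nonneg
  set W : Ω → ℝ := fun ω => max (q - Z ω) 0 with hW
  have hWm : Measurable W := (measurable_const.sub hm).max measurable_const
  have hWnn : ∀ ω, 0 ≤ W ω := fun ω => le_max_right _ _
  -- layer cake
  have hlayer : ∫⁻ ω, ENNReal.ofReal (W ω) ∂P = ∫⁻ t in Set.Ioi 0, P {ω | t < W ω} :=
    lintegral_eq_lintegral_meas_lt P (ae_of_all _ hWnn) hWm.aemeasurable
  have hset : ∀ t : ℝ, 0 < t → {ω | t < W ω} = {ω | Z ω < q - t} := by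
    intro t ht
    ext ω
    simp only [hW, Set.mem_setOf_eq, lt_max_iff]
    constructor
    · rintro (h | h)
      · linarith
      · linarith
    · intro h; exact Or.inl (by linarith)
  -- the part t > q contributes zero
  have hzero : ∀ t ∈ Set.Ioi q, P {ω | t < W ω} = (fun _ : ℝ => (0 : ENNReal)) t := by
    intro t ht
    simp only [Set.mem_Ioi] at ht
    have ht' : (0:ℝ) < t := hq.trans ht
    rw [hset t ht']
    refine measure_mono_null ?_ h0
    intro ω hω
    simp only [Set.mem_setOf_eq] at hω ⊢
    linarith
  have hIoi : ∫⁻ t in Set.Ioi q, P {ω | t < W ω} = 0 := by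
    rw [setLIntegral_congr_fun measurableSet_Ioi hzero, lintegral_zero]
  -- the part 0 < t ≤ q is bounded using convexity
  have hIoc : ∫⁻ t in Set.Ioc 0 q, P {ω | t < W ω}
      ≤ ∫⁻ t in Set.Ioc 0 q, ENNReal.ofReal ((q - t) / q * c) := by
    apply setLIntegral_mono
      (((((measurable_const.sub measurable_id).div_const q)).mul measurable_const).ennreal_ofReal)
    intro t ht
    obtain ⟨ht0, htq⟩ := ht
    show P {ω | t < W ω} ≤ ENNReal.ofReal ((q - t) / q * c)
    rw [hset t ht0]
    rcases eq_or_lt_of_le htq with rfl | hlt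
    · have : {ω | Z ω < t - t} ⊆ {ω | Z ω ≤ 0} := by
        intro ω hω
        simp only [Set.mem_setOf_eq, sub_self] at hω ⊢
        exact hω.le
      rw [measure_mono_null this h0]
      exact zero_le
    · have hsub : {ω | Z ω < q - t} ⊆ {ω | Z ω ≤ q - t} := by
        intro ω hω
        simp only [Set.mem_setOf_eq] at hω ⊢
        exact hω.le
      refine le_trans (measure_mono hsub) ?_
      rw [ENNReal.le_ofReal_iff_toReal_le (measure_ne_top _ _)
        (mul_nonneg (div_nonneg (by linarith) hq.le) hc0)]
      exact cdf_le_linear P Z hm q hq h0 hconv ⟨by linarith, by linarith⟩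
  -- compute the bounding integral
  have hcompute : ∫⁻ t in Set.Ioc 0 q, ENNReal.ofReal ((q - t) / q * c)
      = ENNReal.ofReal (q / 2 * c) := by
    have hcont : Continuous (fun t : ℝ => (q - t) / q * c) := by fun_prop
    have hint : IntegrableOn (fun t : ℝ => (q - t) / q * c) (Set.Ioc 0 q) :=
      hcont.integrableOn_Ioc
    have hnn : 0 ≤ᵐ[volume.restrict (Set.Ioc 0 q)] fun t : ℝ => (q - t) / q * c := by
      rw [Filter.EventuallyLE, ae_restrict_iff' measurableSet_Ioc]
      refine ae_of_all _ fun t ht => ?_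
      exact mul_nonneg (div_nonneg (by linarith [ht.2]) hq.le) hc0
    rw [← ofReal_integral_eq_lintegral_ofReal hint hnn]
    congr 1
    rw [← intervalIntegral.integral_of_le hq.le,
      intervalIntegral.integral_congr (g := fun t : ℝ => c - c / q * t)
        (fun t _ => by field_simp),
      intervalIntegral.integral_sub intervalIntegrable_const
        (intervalIntegral.intervalIntegrable_id.const_mul _),
      intervalIntegral.integral_const, intervalIntegral.integral_const_mul, integral_id]
    field_simp
    ring
  -- bound on the expectation of W
  have hEW : ∫ ω, W ω ∂P ≤ q / 2 * c := by
    rw [integral_eq_lintegral_of_nonneg_ae (ae_of_all _ hWnn) hWm.aestronglyMeasurable]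
    apply ENNReal.toReal_le_of_le_ofReal (by positivity)
    rw [hlayer, ← Set.Ioc_union_Ioi_eq_Ioi hq.le,
      lintegral_union measurableSet_Ioi (Set.Ioc_disjoint_Ioi le_rfl), hIoi, add_zero]
    exact hIoc.trans hcompute.le
  -- relate the truncated integral to E[W]
  set A : Set Ω := {ω | Z ω ≤ q} with hA
  have hAm : MeasurableSet A := hm measurableSet_Iic
  have hindicator : Set.indicator A (fun ω => q - Z ω) = W := by
    funext ω
    by_cases h : ω ∈ A
    · rw [Set.indicator_of_mem h]
      have hzq : Z ω ≤ q := h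
      show q - Z ω = max (q - Z ω) 0
      rw [max_eq_left (by linarith)]
    · rw [Set.indicator_of_notMem h]
      have hzq : ¬ Z ω ≤ q := h
      push_neg at hzq
      show (0:ℝ) = max (q - Z ω) 0
      rw [max_eq_right (by linarith)]
  have e1 : ∫ ω in A, (q - Z ω) ∂P = ∫ ω, W ω ∂P := by
    rw [← integral_indicator hAm, hindicator]
  have e2 : ∫ ω in A, (q - Z ω) ∂P = q * c - ∫ ω in A, Z ω ∂P := by
    rw [integral_sub ((integrable_const q).restrict) hZ.restrict, setIntegral_const,
      smul_eq_mul, mul_comm]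
    rfl
  have := e1 ▸ e2
  have hfin : ∫ ω in A, Z ω ∂P = q * c - ∫ ω, W ω ∂P := by linarith
  rw [ge_iff_le, hfin]
  linarith

end Aux

/-- If `P[Z ≤ 0] = 0`, `P[Z ≤ q] > 0` and `z ↦ P[Z ≤ z]` is convex on `(0, q]`, then
`E[Z·1{Z ≤ q}] ≥ (q/2)·P[Z ≤ q]`, i.e. `E[Z | Z ≤ q] ≥ q/2`. -/
theorem truncated_mean_ge_half_q {Ω : Type*} [MeasurableSpace Ω] (P : Measure Ω)
    [IsProbabilityMeasure P] (Z : Ω → ℝ) (hZ : Integrable Z P) (q : ℝ) (hq : 0 < q)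
    (h0 : P {ω | Z ω ≤ 0} = 0)
    (hpos : 0 < P {ω | Z ω ≤ q})
    (hconv : ConvexOn ℝ (Set.Ioc (0 : ℝ) q) (fun z => (P {ω | Z ω ≤ z}).toReal)) :
    ∫ ω in {ω | Z ω ≤ q}, Z ω ∂P ≥ (q / 2) * (P {ω | Z ω ≤ q}).toReal := by
  obtain ⟨Z', hZ'm, hZZ'⟩ := hZ.1
  have hZ'meas : Measurable Z' := hZ'm.measurable
  have hmeq : ∀ z : ℝ, P {ω | Z ω ≤ z} = P {ω | Z' ω ≤ z} := by
    intro z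
    apply measure_congr
    filter_upwards [hZZ'] with ω hω
    change (Z ω ≤ z) = (Z' ω ≤ z)
    rw [hω]
  have hfun : (fun z => (P {ω | Z' ω ≤ z}).toReal) = fun z => (P {ω | Z ω ≤ z}).toReal :=
    funext fun z => by rw [hmeq]
  have h0' : P {ω | Z' ω ≤ 0} = 0 := by rw [← hmeq]; exact h0
  have hconv' : ConvexOn ℝ (Set.Ioc (0 : ℝ) q) (fun z => (P {ω | Z' ω ≤ z}).toReal) := by
    rw [hfun]; exact hconv
  have key := truncated_core P Z' hZ'meas (hZ.congr hZZ') q hq h0' hconv'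
  have hsets : {ω | Z ω ≤ q} =ᵐ[P] {ω | Z' ω ≤ q} := by
    filter_upwards [hZZ'] with ω hω
    change (Z ω ≤ q) = (Z' ω ≤ q)
    rw [hω]
  calc (q / 2) * (P {ω | Z ω ≤ q}).toReal
      = (q / 2) * (P {ω | Z' ω ≤ q}).toReal := by rw [hmeq]
    _ ≤ ∫ ω in {ω | Z' ω ≤ q}, Z' ω ∂P := key
    _ = ∫ ω in {ω | Z ω ≤ q}, Z' ω ∂P := (setIntegral_congr_set hsets).symm
    _ = ∫ ω in {ω | Z ω ≤ q}, Z ω ∂P :=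
        integral_congr_ae (ae_restrict_of_ae hZZ'.symm)
end

section
/- Let ζ, ξ, ξ' be random variables on a probability space with ζ standard normal and ξ, ξ' independent standard normal, and for ρ ∈ [−1, 1] set η = ρ·ξ + √(1 − ρ²)·ξ'. Let 0 < ε < 1, κ, μ, ν ∈ ℝ and ψ, σ, τ > 0. Then the random vector (ε·exp(κ + ψ·ζ), (1 − ε)·exp(κ + ψ·ζ)) has the same distribution as (exp(μ + σ·ξ), exp(ν + τ·η)) if and only if ψ = τ = σ, ρ = 1, ε = e^μ/(e^μ + e^ν) and κ = log(e^μ + e^ν). -/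
open Real MeasureTheory ProbabilityTheory
open scoped NNReal

/-!
Taking logarithms coordinatewise, both vectors become Gaussian: the one-asset vector is
`(log ε + κ + ψζ, log (1 - ε) + κ + ψζ)` and the two-asset vector is `(μ + σξ, ν + τη)`.
Their first coordinates are `N(log ε + κ, ψ²)` and `N(μ, σ²)`, while the difference of the
coordinates is the constant `log (1 - ε) - log ε` on one side and
`N(ν - μ, (τρ - σ)² + τ²(1 - ρ²))` on the other. A Gaussian is determined by its mean and
variance, so `ψ = σ` and the variance `(τ - σ)² + 2τσ(1 - ρ)` must vanish, forcing `τ = σ` and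
`ρ = 1`; the two means then pin down `ε` and `κ`.
-/

lemma log_add_eq_and_log_one_sub_add_eq_iff {ε κ μ ν : ℝ} (hε0 : 0 < ε) (hε1 : ε < 1) :
    (log ε + κ = μ ∧ log (1 - ε) + κ = ν) ↔
      (ε = exp μ / (exp μ + exp ν) ∧ κ = log (exp μ + exp ν)) := by
  have h1ε : 0 < 1 - ε := sub_pos.mpr hε1
  constructor
  · rintro ⟨rfl, rfl⟩
    have hsum : exp (log ε + κ) + exp (log (1 - ε) + κ) = exp κ := by
      rw [exp_add, exp_add, exp_log hε0, exp_log h1ε]; ring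
    rw [hsum, log_exp, exp_add, exp_log hε0]
    exact ⟨by field_simp, rfl⟩
  · rintro ⟨rfl, rfl⟩
    have hS : 0 < exp μ + exp ν := by positivity
    have h1 : 1 - exp μ / (exp μ + exp ν) = exp ν / (exp μ + exp ν) := by field_simp; ring
    rw [h1, log_div (exp_ne_zero _) hS.ne', log_div (exp_ne_zero _) hS.ne', log_exp, log_exp]
    constructor <;> ring

namespace ProbabilityTheory

variable {Ω : Type*} {mΩ : MeasurableSpace Ω} {P : Measure Ω}

lemma map_exp_prodMk_eq_iff {X₁ X₂ Y₁ Y₂ : Ω → ℝ}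
    (hX : AEMeasurable (fun ω => (X₁ ω, X₂ ω)) P) (hY : AEMeasurable (fun ω => (Y₁ ω, Y₂ ω)) P) :
    P.map (fun ω => (exp (X₁ ω), exp (X₂ ω))) = P.map (fun ω => (exp (Y₁ ω), exp (Y₂ ω))) ↔
      P.map (fun ω => (X₁ ω, X₂ ω)) = P.map (fun ω => (Y₁ ω, Y₂ ω)) := by
  have hexp : Measurable fun p : ℝ × ℝ => (exp p.1, exp p.2) := by fun_prop
  have hlog : Measurable fun p : ℝ × ℝ => (log p.1, log p.2) := by fun_prop
  refine ⟨fun h => ?_, fun h => (IdentDistrib.comp ⟨hX, hY, h⟩ hexp).map_eq⟩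
  simpa [Function.comp_def] using
    (IdentDistrib.comp ⟨hexp.comp_aemeasurable hX, hexp.comp_aemeasurable hY, h⟩ hlog).map_eq

lemma HasLaw.gaussianReal_const_add_mul {X : Ω → ℝ} {m : ℝ} {v : ℝ≥0}
    (hX : HasLaw X (gaussianReal m v) P) (c a : ℝ) :
    HasLaw (fun ω => c + a * X ω) (gaussianReal (c + a * m) (.mk (a ^ 2) (sq_nonneg a) * v)) P := by
  simpa [add_comm] using gaussianReal_const_add (gaussianReal_const_mul hX a) c

lemma IndepFun.hasLaw_gaussianReal_const_add_mul_add_mul {X Y : Ω → ℝ} {m₁ m₂ : ℝ}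
    {v₁ v₂ : ℝ≥0} (hXY : IndepFun X Y P) (hX : HasLaw X (gaussianReal m₁ v₁) P)
    (hY : HasLaw Y (gaussianReal m₂ v₂) P) (c a b : ℝ) :
    HasLaw (fun ω => c + a * X ω + b * Y ω) (gaussianReal (c + a * m₁ + b * m₂)
      (.mk (a ^ 2) (sq_nonneg a) * v₁ + .mk (b ^ 2) (sq_nonneg b) * v₂)) P := by
  have hsum : HasLaw (fun ω => a * X ω + b * Y ω) (gaussianReal (a * m₁ + b * m₂)
      (.mk (a ^ 2) (sq_nonneg a) * v₁ + .mk (b ^ 2) (sq_nonneg b) * v₂)) P :=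
    ⟨by fun_prop, gaussianReal_add_gaussianReal_of_indepFun
      (hXY.comp (measurable_const_mul a) (measurable_const_mul b))
      (gaussianReal_const_mul hX a).map_eq (gaussianReal_const_mul hY b).map_eq⟩
  simpa [add_assoc, add_comm] using gaussianReal_const_add hsum c

lemma hasLaw_const_gaussianReal [IsProbabilityMeasure P] (c : ℝ) :
    HasLaw (fun _ : Ω => c) (gaussianReal c 0) P :=
  ⟨aemeasurable_const, by simp [gaussianReal_zero_var]⟩

lemma IdentDistrib.eq_of_hasLaw_gaussianReal_comp {E : Type*} [MeasurableSpace E] {X Y : Ω → E}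
    (h : IdentDistrib X Y P P) {g : E → ℝ} (hg : Measurable g) {m₁ m₂ : ℝ} {v₁ v₂ : ℝ≥0}
    (hX : HasLaw (g ∘ X) (gaussianReal m₁ v₁) P) (hY : HasLaw (g ∘ Y) (gaussianReal m₂ v₂) P) :
    m₁ = m₂ ∧ (v₁ : ℝ) = v₂ := by
  rw [NNReal.coe_inj, ← gaussianReal_ext_iff]
  exact hX.map_eq.symm.trans ((h.comp hg).map_eq.trans hY.map_eq)

lemma logOneAsset_eq_logTwoAssets_iff [IsProbabilityMeasure P] {ζ ξ ξ' : Ω → ℝ}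
    (hζ : HasLaw ζ (gaussianReal 0 1) P) (hξ : HasLaw ξ (gaussianReal 0 1) P)
    (hξ' : HasLaw ξ' (gaussianReal 0 1) P) (hindep : IndepFun ξ ξ' P) {ρ : ℝ}
    (hρ : ρ ∈ Set.Icc (-1 : ℝ) 1) {a b μ ν ψ σ τ : ℝ} (hψ : 0 < ψ) (hσ : 0 < σ) (hτ : 0 < τ) :
    P.map (fun ω => (a + ψ * ζ ω, b + ψ * ζ ω)) =
        P.map (fun ω => (μ + σ * ξ ω, ν + τ * (ρ * ξ ω + √(1 - ρ ^ 2) * ξ' ω))) ↔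
      ψ = τ ∧ τ = σ ∧ ρ = 1 ∧ a = μ ∧ b = ν := by
  constructor
  · intro h
    have hid : IdentDistrib _ _ P P := ⟨by fun_prop, by fun_prop, h⟩
    obtain ⟨ha, hψσ⟩ := hid.eq_of_hasLaw_gaussianReal_comp measurable_fst
      (hζ.gaussianReal_const_add_mul a ψ) (hξ.gaussianReal_const_add_mul μ σ)
    obtain ⟨hba, hvar⟩ := hid.eq_of_hasLaw_gaussianReal_comp (measurable_snd.sub measurable_fst)
      ((hasLaw_const_gaussianReal (b - a)).congr (ae_of_all _ fun ω => by
        simp only [Function.comp_apply, Pi.sub_apply]; ring))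
      ((hindep.hasLaw_gaussianReal_const_add_mul_add_mul hξ hξ' (ν - μ) (τ * ρ - σ)
        (τ * √(1 - ρ ^ 2))).congr (ae_of_all _ fun ω => by
          simp only [Function.comp_apply, Pi.sub_apply]; ring))
    simp only [mul_one, NNReal.coe_add, NNReal.coe_mk, NNReal.coe_zero] at hψσ hvar
    obtain ⟨hρl, hρr⟩ := hρ
    have hsq : (τ * √(1 - ρ ^ 2)) ^ 2 = τ ^ 2 * (1 - ρ ^ 2) := by
      rw [mul_pow, sq_sqrt (by nlinarith)]
    have hvar_eq : (τ - σ) ^ 2 + 2 * τ * σ * (1 - ρ) = 0 := by linear_combination -hvar - hsq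
    have hτσ : τ = σ := by nlinarith [sq_nonneg (τ - σ), mul_pos hτ hσ]
    have hρ1 : ρ = 1 := by nlinarith [mul_pos hτ hσ]
    replace hψσ : ψ = σ := (pow_left_inj₀ hψ.le hσ.le two_ne_zero).mp hψσ
    exact ⟨hψσ.trans hτσ.symm, hτσ, hρ1, by linarith, by linarith⟩
  · rintro ⟨rfl, rfl, rfl, rfl, rfl⟩
    simp only [one_pow, sub_self, sqrt_zero, zero_mul, add_zero, one_mul]
    exact (IdentDistrib.comp ⟨hζ.aemeasurable, hξ.aemeasurable, hζ.map_eq.trans hξ.map_eq.symm⟩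
      (u := fun z => (a + ψ * z, b + ψ * z)) (by fun_prop)).map_eq

end ProbabilityTheory

/-- One-asset model `(ε·A, (1-ε)·A)`, with `A = exp(κ + ψ·ζ)` for `ζ` standard normal,
and two-assets model `(exp(μ + σ·ξ), exp(ν + τ·η))`, with `(ξ, η)` bivariate standard
normal with correlation `ρ` (realised as `η = ρ·ξ + √(1-ρ²)·ξ'` for independent standard
normal `ξ, ξ'`), have the same distribution on `ℝ²` if and only if
`ψ = τ = σ`, `ρ = 1`, `ε = e^μ/(e^μ + e^ν)` and `κ = log(e^μ + e^ν)`. -/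
theorem oneAsset_eq_twoAssets_iff {Ω : Type*} [MeasurableSpace Ω] (P : Measure Ω)
    [IsProbabilityMeasure P] (ζ ξ ξ' : Ω → ℝ)
    (hζmeas : Measurable ζ) (hξmeas : Measurable ξ) (hξ'meas : Measurable ξ')
    (hζ : Measure.map ζ P = gaussianReal 0 1)
    (hξ : Measure.map ξ P = gaussianReal 0 1)
    (hξ' : Measure.map ξ' P = gaussianReal 0 1)
    (hindep : IndepFun ξ ξ' P)
    (ρ : ℝ) (hρ : ρ ∈ Set.Icc (-1 : ℝ) 1)
    (ε κ μ ν ψ σ τ : ℝ) (hε0 : 0 < ε) (hε1 : ε < 1)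
    (hψ : 0 < ψ) (hσ : 0 < σ) (hτ : 0 < τ) :
    (Measure.map (fun ω =>
        (ε * Real.exp (κ + ψ * ζ ω), (1 - ε) * Real.exp (κ + ψ * ζ ω))) P
      = Measure.map (fun ω =>
        (Real.exp (μ + σ * ξ ω),
         Real.exp (ν + τ * (ρ * ξ ω + Real.sqrt (1 - ρ ^ 2) * ξ' ω)))) P)
    ↔ (ψ = τ ∧ τ = σ ∧ ρ = 1 ∧ ε = Real.exp μ / (Real.exp μ + Real.exp ν) ∧
        κ = Real.log (Real.exp μ + Real.exp ν)) := by
  have hone : (fun ω => (ε * exp (κ + ψ * ζ ω), (1 - ε) * exp (κ + ψ * ζ ω))) =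
      fun ω => (exp (log ε + κ + ψ * ζ ω), exp (log (1 - ε) + κ + ψ * ζ ω)) := by
    funext ω
    simp only [add_assoc, exp_add (log _), exp_log hε0, exp_log (sub_pos.mpr hε1)]
  rw [hone, map_exp_prodMk_eq_iff (by fun_prop) (by fun_prop),
    logOneAsset_eq_logTwoAssets_iff ⟨hζmeas.aemeasurable, hζ⟩ ⟨hξmeas.aemeasurable, hξ⟩
      ⟨hξ'meas.aemeasurable, hξ'⟩ hindep hρ hψ hσ hτ,
    ← log_add_eq_and_log_one_sub_add_eq_iff hε0 hε1]
end
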